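/- Let (X,𝒳) be a measurable space and P a Markov kernel on X satisfying (H1), (H2) with set C and constants u > 1, M > 0, and (H3) with constants r ∈ (0,1), L ≥ 1. Let n ≥ 1, c ∈ ℝ₊ⁿ, f ∈ BD(Xⁿ,c), x ∈ X, τ_C^i = inf{m ≥ i : X_m ∈ C}, and for 0 ≤ j ≤ n−2 define g_j(x_0,…,x_j) = E_{x_j}[f(x_0,…,x_j, X_1,…,X_{n-1-j})] and g_{j,π}(x_0,…,x_j) = E_π[f(x_0,…,x_j, X_1,…,X_{n-1-j})]. Then for every 1 ≤ i ≤ n−1, P_x-almost surely: |Σ_{j=i}^{n-2} ( g_j(X_0,…,X_j) − g_{j,π}(X_0,…,X_j) ) 1{τ_C^{i-1} = i−1, τ_C^i = j}| ≤ 2L · 1{τ_C^{i-1} = i−1} · Σ_{k=τ_C^i+1}^{n-1} c_k r^{k − τ_C^i}. -/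

import Mathlib

open MeasureTheory ProbabilityTheory ENNReal Set
open scoped Classical

noncomputable section

namespace QMD

variable {𝓧 : Type*} [MeasurableSpace 𝓧]

/-- `BD 𝓧 n c` : the set of measurable functions `f : 𝓧ⁿ → ℝ` with bounded differences `c`,
i.e. `|f x - f y| ≤ ∑ i, c i · 1{x i ≠ y i}`. -/
def BD (𝓧 : Type*) [MeasurableSpace 𝓧] (n : ℕ) (c : Fin n → ℝ) :
    Set ((Fin n → 𝓧) → ℝ) :=
  {f | Measurable f ∧
    ∀ x y : Fin n → 𝓧, |f x - f y| ≤ ∑ i, if x i = y i then 0 else c i}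

/-- Prepend a point to a path. -/
def cons0 (x : 𝓧) (ω : ℕ → 𝓧) : ℕ → 𝓧 := fun n => Nat.casesOn n x ω

/-- `IsMarkovFamily P μm` : for every initial probability distribution `ξ`,
`μm ξ` is the law `P_ξ` on the canonical space `ℕ → 𝓧` of the Markov chain with
kernel `P` and initial distribution `ξ`; this is characterized by the fact that
`μm ξ` is a probability measure and by the one-step disintegration
`P_ξ = ∫ (law of (x, X_0, X_1, …) with (X_k) ∼ P_{P(x,·)}) ξ(dx)`. -/
def IsMarkovFamily (P : Kernel 𝓧 𝓧) (μm : Measure 𝓧 → Measure (ℕ → 𝓧)) : Prop :=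
  (∀ ξ : Measure 𝓧, IsProbabilityMeasure ξ → IsProbabilityMeasure (μm ξ)) ∧
  ∀ ξ : Measure 𝓧, IsProbabilityMeasure ξ →
    μm ξ = ξ.bind fun x => (μm (P x)).map (cons0 x)

/-- Total variation distance between two measures. -/
noncomputable def dTV (ξ ξ' : Measure 𝓧) : ℝ :=
  ⨆ A : {A : Set 𝓧 // MeasurableSet A}, |(ξ A.1).toReal - (ξ' A.1).toReal|

/-- The natural filtration `𝓕_i = σ(X_0, …, X_i)` on the canonical space. -/
def Fil (𝓧 : Type*) [MeasurableSpace 𝓧] (i : ℕ) : MeasurableSpace (ℕ → 𝓧) :=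
  MeasurableSpace.comap (fun ω (k : Fin (i + 1)) => ω (k : ℕ)) inferInstance

/-- The σ-algebra `𝓕_τ` associated with a (stopping) time `τ`. -/
def stoppedSA (τ : (ℕ → 𝓧) → ℕ∞) : MeasurableSpace (ℕ → 𝓧) :=
  MeasurableSpace.generateFrom
    {A | ∀ m : ℕ, MeasurableSet[Fil 𝓧 m] (A ∩ {ω | τ ω ≤ (m : ℕ∞)})}

/-- `hitTime C i ω = τ_C^i(ω) = inf {m ≥ i : ω m ∈ C}` (`⊤` if `C` is never hit after `i`). -/
noncomputable def hitTime (C : Set 𝓧) (i : ℕ) (ω : ℕ → 𝓧) : ℕ∞ :=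
  ⨅ (m : ℕ) (_ : i ≤ m ∧ ω m ∈ C), (m : ℕ∞)

/-- The return time `σ_C = inf {m ≥ 1 : ω m ∈ C}`. -/
noncomputable def retTime (C : Set 𝓧) : (ℕ → 𝓧) → ℕ∞ := hitTime C 1

/-- The shift operator `θ` on the canonical space. -/
def shift (ω : ℕ → 𝓧) : ℕ → 𝓧 := fun k => ω (k + 1)

/-- `geomPow b m = b ^ m ∈ [0,∞]` for an extended natural exponent `m` (for a base `b > 1`). -/
noncomputable def geomPow (b : ℝ) (m : ℕ∞) : ℝ≥0∞ :=
  if m = ⊤ then ⊤ else ENNReal.ofReal (b ^ m.toNat)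

/-- Iterates of a kernel. -/
noncomputable def kpow (P : Kernel 𝓧 𝓧) : ℕ → Kernel 𝓧 𝓧
  | 0 => Kernel.id
  | m + 1 => P.comp (kpow P m)

/-- `P` is irreducible and aperiodic: there is a nonzero measure `ψ` such that any
`ψ`-positive set is reached with positive probability at all large enough times,
from every starting point. -/
def IrreducibleAperiodic (P : Kernel 𝓧 𝓧) : Prop :=
  ∃ ψ : Measure 𝓧, ψ ≠ 0 ∧ ∀ (x : 𝓧) (A : Set 𝓧), MeasurableSet A → ψ A ≠ 0 →
    ∃ N : ℕ, ∀ m ≥ N, kpow P m x A ≠ 0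

/-- `pad n i x* v` : the vector in `𝓧ⁿ` whose first `i` coordinates are `x*`,
followed by `v 0, v 1, …`. -/
def pad (n i : ℕ) (xstar : 𝓧) (v : ℕ → 𝓧) : Fin n → 𝓧 :=
  fun k => if (k : ℕ) < i then xstar else v ((k : ℕ) - i)

/-- `padAt n i x* ω` : the vector `(x*, …, x*, ω i, ω (i+1), …, ω (n-1))` (with `i`
copies of `x*`). -/
def padAt (n i : ℕ) (xstar : 𝓧) (ω : ℕ → 𝓧) : Fin n → 𝓧 :=
  fun k => if (k : ℕ) < i then xstar else ω (k : ℕ)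

/-- `g_i(x_0,…,x_i) = E_{x_i}[f(x_0,…,x_i, X_1,…,X_{n-1-i})]`. -/
noncomputable def gfun (μm : Measure 𝓧 → Measure (ℕ → 𝓧)) {n : ℕ}
    (f : (Fin n → 𝓧) → ℝ) (i : Fin n) (v : Fin n → 𝓧) : ℝ :=
  ∫ ω, f (fun k => if (k : ℕ) ≤ (i : ℕ) then v k else ω ((k : ℕ) - (i : ℕ)))
    ∂(μm (Measure.dirac (v i)))

/-- `g_{i,π}(x_0,…,x_i) = E_π[f(x_0,…,x_i, X_1,…,X_{n-1-i})]`. -/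
noncomputable def gfunPi (μm : Measure 𝓧 → Measure (ℕ → 𝓧)) (π : Measure 𝓧) {n : ℕ}
    (f : (Fin n → 𝓧) → ℝ) (i : Fin n) (v : Fin n → 𝓧) : ℝ :=
  ∫ ω, f (fun k => if (k : ℕ) ≤ (i : ℕ) then v k else ω ((k : ℕ) - (i : ℕ))) ∂(μm π)

/-- `G_i = E_x[ f(X_0,…,X_{n-1}) | 𝓕_{τ_C^i} ]`. -/
noncomputable def Gfun (μm : Measure 𝓧 → Measure (ℕ → 𝓧)) (C : Set 𝓧) {n : ℕ}
    (f : (Fin n → 𝓧) → ℝ) (x : 𝓧) (i : ℕ) : (ℕ → 𝓧) → ℝ :=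
  (μm (Measure.dirac x))[(fun ω => f (fun k => ω (k : ℕ))) | stoppedSA (hitTime C i)]

section Helpers
variable {α β γ : Type*} [MeasurableSpace α] [MeasurableSpace β] [MeasurableSpace γ]

lemma bind_congr_ae {ξ : Measure α} {F G : α → Measure β} (h : F =ᵐ[ξ] G) :
    ξ.bind F = ξ.bind G := by
  simp only [Measure.bind]; rw [Measure.map_congr h]

lemma bind_of_not_aemeasurable {ξ : Measure α} {F : α → Measure β}
    (h : ¬ AEMeasurable F ξ) : ξ.bind F = 0 := by
  simp only [Measure.bind]
  rw [Measure.map_of_not_aemeasurable h, Measure.join_zero]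

lemma aemeasurable_of_bind_prob {ξ : Measure α} {F : α → Measure β}
    [h : IsProbabilityMeasure (ξ.bind F)] : AEMeasurable F ξ := by
  by_contra hc
  have h0 := bind_of_not_aemeasurable hc
  rw [h0] at h
  exact (one_ne_zero (α := ℝ≥0∞)) (h.measure_univ.symm.trans rfl)

lemma dirac_bind_eq {z : α} {F : α → Measure β} (hF : AEMeasurable F (Measure.dirac z)) :
    (Measure.dirac z).bind F = F z := by
  set G := hF.mk F with hGdef
  have hae : F =ᵐ[Measure.dirac z] G := hF.ae_eq_mk
  have hz : F z = G z := by
    by_contra hne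
    have h0 : Measure.dirac z {x | ¬ F x = G x} = 0 := ae_iff.mp hae
    rw [Measure.dirac_apply_of_mem (by exact hne)] at h0
    exact one_ne_zero h0
  rw [bind_congr_ae hae, Measure.dirac_bind hF.measurable_mk z, hz]

lemma map_bind_ae {ξ : Measure α} {F : α → Measure β} (hF : AEMeasurable F ξ)
    {gm : β → γ} (hg : Measurable gm) :
    (ξ.bind F).map gm = ξ.bind (fun x => (F x).map gm) := by
  have hae : F =ᵐ[ξ] hF.mk F := hF.ae_eq_mk
  have key : ∀ G : α → Measure β, Measurable G →
      (ξ.bind G).map gm = ξ.bind (fun x => (G x).map gm) := by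
    intro G hG
    ext s hs
    have hM : Measurable fun x => (G x).map gm := (Measure.measurable_map gm hg).comp hG
    rw [Measure.map_apply hg hs, Measure.bind_apply (hg hs) hG.aemeasurable, Measure.bind_apply hs hM.aemeasurable]
    exact lintegral_congr fun x => (Measure.map_apply hg hs).symm
  rw [bind_congr_ae hae, key _ hF.measurable_mk,
    bind_congr_ae (show (fun x => (hF.mk F x).map gm) =ᵐ[ξ] (fun x => (F x).map gm) from
      hae.mono fun x hx => congrArg (Measure.map gm) hx.symm)]

lemma bind_bind_ae {ξ : Measure α} {F : α → Measure β} (hF : AEMeasurable F ξ)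
    {G : β → Measure γ} (hG : Measurable G) :
    (ξ.bind F).bind G = ξ.bind (fun x => (F x).bind G) := by
  have hae : F =ᵐ[ξ] hF.mk F := hF.ae_eq_mk
  rw [bind_congr_ae hae, Measure.bind_bind hF.measurable_mk.aemeasurable hG.aemeasurable,
    bind_congr_ae (show (fun x => (hF.mk F x).bind G) =ᵐ[ξ] (fun x => (F x).bind G) from
      hae.mono fun x hx => congrArg (fun ν => Measure.bind ν G) hx.symm)]

lemma integrable_of_bdd {ρ : Measure β} [IsFiniteMeasure ρ] {g : β → ℝ} {B : ℝ}
    (hg : AEStronglyMeasurable g ρ) (hB : ∀ ω, |g ω| ≤ B) : Integrable g ρ :=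
  (integrable_const B).mono' hg (Filter.Eventually.of_forall fun ω => by
    simpa [Real.norm_eq_abs] using hB ω)

lemma integral_eq_lintegral_shift {ρ : Measure β} [IsProbabilityMeasure ρ] {g : β → ℝ} {B : ℝ}
    (hg : Measurable g) (hB : ∀ ω, |g ω| ≤ B) :
    ∫ ω, g ω ∂ρ = (∫⁻ ω, ENNReal.ofReal (g ω + B) ∂ρ).toReal - B := by
  have hint : Integrable g ρ := integrable_of_bdd hg.aestronglyMeasurable hB
  have h1 : ∫ ω, (g ω + B) ∂ρ = ∫ ω, g ω ∂ρ + B := by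
    rw [integral_add hint (integrable_const B), integral_const]; simp
  have h2 : ∫ ω, (g ω + B) ∂ρ = (∫⁻ ω, ENNReal.ofReal (g ω + B) ∂ρ).toReal := by
    rw [integral_eq_lintegral_of_nonneg_ae (f := fun ω => g ω + B) (Filter.Eventually.of_forall fun ω => by
      simp only [Pi.zero_apply]
      have := abs_le.mp (hB ω); linarith)
      ((hg.add measurable_const).aestronglyMeasurable)]
  rw [← h2, h1]; ring

lemma integral_bind_of_bdd (ξ : Measure α) [IsProbabilityMeasure ξ]
    (F : α → Measure β) (hF : AEMeasurable F ξ) (hFp : ∀ x, IsProbabilityMeasure (F x))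
    {g : β → ℝ} (hg : Measurable g) {B : ℝ} (hB0 : 0 ≤ B) (hB : ∀ ω, |g ω| ≤ B) :
    ∫ ω, g ω ∂(ξ.bind F) = ∫ x, ∫ ω, g ω ∂(F x) ∂ξ := by
  classical
  set G := hF.mk F with hGdef
  have hGm : Measurable G := hF.measurable_mk
  have hae : F =ᵐ[ξ] G := hF.ae_eq_mk
  have hbind : ξ.bind F = ξ.bind G := bind_congr_ae hae
  have hgB : Measurable fun ω => ENNReal.ofReal (g ω + B) :=
    (hg.add measurable_const).ennreal_ofReal
  set ℓ : α → ℝ≥0∞ := fun x => ∫⁻ ω, ENNReal.ofReal (g ω + B) ∂(G x) with hℓdef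
  have hℓm : Measurable ℓ := (Measure.measurable_lintegral hgB).comp hGm
  have hℓbd : ∀ᵐ x ∂ξ, ℓ x ≤ ENNReal.ofReal (2 * B) := by
    filter_upwards [hae] with x hx
    have hle : ℓ x ≤ ∫⁻ _, ENNReal.ofReal (2 * B) ∂(G x) := by
      apply lintegral_mono; intro ω
      apply ENNReal.ofReal_le_ofReal
      have := abs_le.mp (hB ω); linarith
    rw [lintegral_const, ← hx] at hle
    haveI := hFp x
    simpa [measure_univ] using hle
  have hℓfin : ∀ᵐ x ∂ξ, ℓ x < ⊤ :=
    hℓbd.mono fun x hx => lt_of_le_of_lt hx ENNReal.ofReal_lt_top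
  -- prob of bind
  haveI hbp : IsProbabilityMeasure (ξ.bind F) := by
    constructor
    rw [hbind, Measure.bind_apply MeasurableSet.univ hGm.aemeasurable]
    have : ∫⁻ x, (G x) Set.univ ∂ξ = ∫⁻ _, 1 ∂ξ := by
      apply lintegral_congr_ae
      filter_upwards [hae] with x hx
      haveI := hFp x
      rw [← hx]; exact measure_univ
    rw [this]; simp
  -- LHS
  have hLHS : ∫ ω, g ω ∂(ξ.bind F) = (∫⁻ x, ℓ x ∂ξ).toReal - B := by
    rw [integral_eq_lintegral_shift hg hB, hbind,
      Measure.lintegral_bind hGm.aemeasurable hgB.aemeasurable]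
  -- RHS
  have hRHS : ∫ x, ∫ ω, g ω ∂(F x) ∂ξ = (∫⁻ x, ℓ x ∂ξ).toReal - B := by
    have hcong : ∫ x, ∫ ω, g ω ∂(F x) ∂ξ = ∫ x, ((ℓ x).toReal - B) ∂ξ := by
      apply integral_congr_ae
      filter_upwards [hae] with x hx
      haveI := hFp x
      rw [integral_eq_lintegral_shift hg hB, hℓdef]
      rw [hx]
    rw [hcong]
    have hint : Integrable (fun x => (ℓ x).toReal) ξ := by
      apply (integrable_const (2*B)).mono' hℓm.ennreal_toReal.aestronglyMeasurable
      filter_upwards [hℓbd] with x hx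
      rw [Real.norm_eq_abs, abs_of_nonneg ENNReal.toReal_nonneg]
      exact ENNReal.toReal_le_of_le_ofReal (by linarith) hx
    rw [integral_sub hint (integrable_const B), integral_const, probReal_univ,
      integral_toReal hℓm.aemeasurable hℓfin]
    simp
  rw [hLHS, hRHS]
end Helpers

section Markov
variable {𝓧 : Type*} [MeasurableSpace 𝓧]

lemma measurable_cons0_pair : Measurable (fun p : 𝓧 × (ℕ → 𝓧) => cons0 p.1 p.2) := by
  apply measurable_pi_lambda
  intro k
  cases k with
  | zero => exact measurable_fst
  | succ k => exact (measurable_pi_apply k).comp measurable_snd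

lemma measurable_cons0 (z : 𝓧) : Measurable (cons0 z : (ℕ → 𝓧) → ℕ → 𝓧) :=
  measurable_cons0_pair.comp (measurable_const.prodMk measurable_id)

variable (P : Kernel 𝓧 𝓧) [IsMarkovKernel P] (μm : Measure 𝓧 → Measure (ℕ → 𝓧))
  (hμm : IsMarkovFamily P μm)

include hμm

lemma prob_μδ (z : 𝓧) : IsProbabilityMeasure (μm (Measure.dirac z)) :=
  hμm.1 _ inferInstance

lemma μδ_eq (z : 𝓧) : μm (Measure.dirac z) = (μm (P z)).map (cons0 z) := by
  have h2 := hμm.2 (Measure.dirac z) inferInstance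
  have hFae : AEMeasurable (fun x => (μm (P x)).map (cons0 x)) (Measure.dirac z) := by
    by_contra hc
    have h0 := bind_of_not_aemeasurable hc
    rw [h0] at h2
    haveI := prob_μδ P μm hμm z
    rw [h2] at this
    exact (one_ne_zero (α := ℝ≥0∞)) (this.measure_univ.symm.trans rfl)
  rw [h2, dirac_bind_eq hFae]

lemma bindδ (ξ : Measure 𝓧) [IsProbabilityMeasure ξ] :
    μm ξ = ξ.bind (fun z => μm (Measure.dirac z)) := by
  have h2 := hμm.2 ξ inferInstance
  rw [h2]
  congr 1
  funext x
  exact (μδ_eq P μm hμm x).symm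

lemma aemeasurable_μδ (ξ : Measure 𝓧) [IsProbabilityMeasure ξ] :
    AEMeasurable (fun z => μm (Measure.dirac z)) ξ := by
  by_contra hc
  have h0 := bind_of_not_aemeasurable hc
  have h2 := bindδ P μm hμm ξ
  rw [h0] at h2
  haveI := hμm.1 ξ inferInstance
  rw [h2] at this
  exact (one_ne_zero (α := ℝ≥0∞)) (this.measure_univ.symm.trans rfl)

lemma Mfun_zero (z : 𝓧) : (μm (Measure.dirac z)).map (fun ω => ω 0) = Measure.dirac z := by
  rw [μδ_eq P μm hμm z,
    Measure.map_map (measurable_pi_apply 0) (measurable_cons0 z)]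
  have : ((fun ω : ℕ → 𝓧 => ω 0) ∘ cons0 z) = fun _ => z := rfl
  rw [this]
  haveI := hμm.1 (P z) inferInstance
  simp [Measure.map_const]

lemma Mfun_succ (l : ℕ) (z : 𝓧) :
    (μm (Measure.dirac z)).map (fun ω => ω (l + 1)) =
      (P z).bind (fun x => (μm (Measure.dirac x)).map (fun ω => ω l)) := by
  rw [μδ_eq P μm hμm z,
    Measure.map_map (measurable_pi_apply (l+1)) (measurable_cons0 z)]
  have h1 : ((fun ω : ℕ → 𝓧 => ω (l+1)) ∘ cons0 z) = fun ω => ω l := rfl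
  rw [h1, bindδ P μm hμm (P z),
    map_bind_ae (aemeasurable_μδ P μm hμm (P z)) (measurable_pi_apply l)]

lemma Mfun_succ' (l : ℕ) (z : 𝓧) :
    (μm (Measure.dirac z)).map (fun ω => ω (l + 1)) =
      ((μm (Measure.dirac z)).map (fun ω => ω l)).bind (fun x => P x) := by
  induction l generalizing z with
  | zero =>
    rw [Mfun_succ P μm hμm 0 z, Mfun_zero P μm hμm z,
      Measure.dirac_bind P.measurable z]
    have : ∀ x, (μm (Measure.dirac x)).map (fun ω : ℕ → 𝓧 => ω 0) = Measure.dirac x :=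
      Mfun_zero P μm hμm
    rw [funext this, Measure.bind_dirac]
  | succ l IH =>
    rw [Mfun_succ P μm hμm (l+1) z]
    have h1 : (fun x => (μm (Measure.dirac x)).map (fun ω : ℕ → 𝓧 => ω (l+1))) =
        fun x => ((μm (Measure.dirac x)).map (fun ω : ℕ → 𝓧 => ω l)).bind (fun w => P w) := by
      funext x; exact IH x
    rw [h1, ← bind_bind_ae ?hF P.measurable, ← Mfun_succ P μm hμm l z]
    case hF =>
      exact ((Measure.measurable_map _ (measurable_pi_apply l)).comp_aemeasurable
        (aemeasurable_μδ P μm hμm (P z)))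

lemma prob_marginal (z : 𝓧) (l : ℕ) :
    IsProbabilityMeasure ((μm (Measure.dirac z)).map (fun ω => ω l)) := by
  haveI := prob_μδ P μm hμm z
  exact Measure.isProbabilityMeasure_map (measurable_pi_apply l).aemeasurable

end Markov
section IterExp
variable {𝓧 : Type*} [MeasurableSpace 𝓧]

noncomputable def iterExp (P : Kernel 𝓧 𝓧) : ℕ → ((ℕ → 𝓧) → ℝ) → 𝓧 → ℝ
  | 0 => fun g z => g (fun _ => z)
  | q + 1 => fun g z => ∫ z', iterExp P q (fun ω => g (cons0 z ω)) z' ∂(P z)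

lemma measurable_iterExp (P : Kernel 𝓧 𝓧) [IsSFiniteKernel P] :
    ∀ (q : ℕ) (G : (ℕ → 𝓧) × (ℕ → 𝓧) → ℝ), Measurable G →
      Measurable (fun p : (ℕ → 𝓧) × 𝓧 => iterExp P q (fun ω => G (p.1, ω)) p.2) := by
  intro q
  induction q with
  | zero =>
    intro G hG
    exact hG.comp (measurable_fst.prodMk (measurable_pi_lambda _ fun _ => measurable_snd))
  | succ q IH =>
    intro G hG
    set G' : (ℕ → 𝓧) × (ℕ → 𝓧) → ℝ :=
      fun r => G (fun k => r.1 (k + 1), cons0 (r.1 0) r.2) with hG'def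
    have hG' : Measurable G' := by
      apply hG.comp
      apply Measurable.prodMk
      · exact measurable_pi_lambda _ fun k => (measurable_pi_apply (k+1)).comp measurable_fst
      · exact measurable_cons0_pair.comp
          (((measurable_pi_apply 0).comp measurable_fst).prodMk measurable_snd)
    have hΨ := IH G' hG'
    have h2 := MeasureTheory.StronglyMeasurable.integral_kernel_prod_right'
      (κ := P.comap (Prod.snd : (ℕ → 𝓧) × 𝓧 → 𝓧) measurable_snd)
      (f := fun r : ((ℕ → 𝓧) × 𝓧) × 𝓧 =>
        iterExp P q (fun ω => G' (cons0 r.1.2 r.1.1, ω)) r.2)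
      (hΨ.stronglyMeasurable.comp_measurable
        ((measurable_cons0_pair.comp ((measurable_snd.comp measurable_fst).prodMk
          (measurable_fst.comp measurable_fst))).prodMk measurable_snd))
    have h3 : Measurable fun p : (ℕ → 𝓧) × 𝓧 =>
        ∫ z', iterExp P q (fun ω => G (p.1, cons0 p.2 ω)) z' ∂(P p.2) := by
      have := h2.measurable
      simpa [Kernel.comap_apply, hG'def, cons0] using this
    simpa [iterExp] using h3

lemma measurable_iterExp' (P : Kernel 𝓧 𝓧) [IsSFiniteKernel P] (q : ℕ)
    {g : (ℕ → 𝓧) → ℝ} (hg : Measurable g) : Measurable (iterExp P q g) := by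
  have h := measurable_iterExp P q (fun r => g r.2) (hg.comp measurable_snd)
  have h2 : Measurable fun z : 𝓧 => ((fun _ => z : ℕ → 𝓧), z) :=
    (measurable_pi_lambda _ fun _ => measurable_id).prodMk measurable_id
  exact h.comp h2

lemma abs_iterExp_le (P : Kernel 𝓧 𝓧) [IsMarkovKernel P] :
    ∀ (q : ℕ) (g : (ℕ → 𝓧) → ℝ) (B : ℝ), (∀ ω, |g ω| ≤ B) → ∀ z, |iterExp P q g z| ≤ B := by
  intro q
  induction q with
  | zero => intro g B hB z; exact hB _
  | succ q IH =>
    intro g B hB z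
    have : ‖∫ z', iterExp P q (fun ω => g (cons0 z ω)) z' ∂(P z)‖ ≤
        B * ((P z) Set.univ).toReal := by
      apply norm_integral_le_of_norm_le_const
      apply Filter.Eventually.of_forall
      intro z'
      rw [Real.norm_eq_abs]
      exact IH _ B (fun ω => hB _) z'
    rw [Real.norm_eq_abs] at this
    simpa [iterExp, measure_univ] using this

variable (P : Kernel 𝓧 𝓧) [IsMarkovKernel P] (μm : Measure 𝓧 → Measure (ℕ → 𝓧))
  (hμm : IsMarkovFamily P μm)

include hμm

lemma iterExp_eq :
    ∀ (q : ℕ) (g : (ℕ → 𝓧) → ℝ) (B : ℝ), Measurable g → (∀ ω, |g ω| ≤ B) →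
      (∀ ω ω', (∀ k ≤ q, ω k = ω' k) → g ω = g ω') →
      ∀ z, ∫ ω, g ω ∂(μm (Measure.dirac z)) = iterExp P q g z := by
  intro q
  induction q with
  | zero =>
    intro g B hg hB hdep z
    haveI := hμm.1 (P z) inferInstance
    rw [μδ_eq P μm hμm z, integral_map (measurable_cons0 z).aemeasurable
      hg.aestronglyMeasurable]
    have : ∀ ω, g (cons0 z ω) = g (fun _ => z) := by
      intro ω
      apply hdep
      intro k hk
      interval_cases k
      rfl
    rw [integral_congr_ae (Filter.Eventually.of_forall this)]
    simp [iterExp]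
  | succ q IH =>
    intro g B hg hB hdep z
    have hB0 : 0 ≤ B := le_trans (abs_nonneg _) (hB (fun _ => z))
    haveI := hμm.1 (P z) inferInstance
    have hgc : Measurable fun ω => g (cons0 z ω) := hg.comp (measurable_cons0 z)
    rw [μδ_eq P μm hμm z, integral_map (measurable_cons0 z).aemeasurable
      hg.aestronglyMeasurable, bindδ P μm hμm (P z),
      integral_bind_of_bdd (P z) _ (aemeasurable_μδ P μm hμm (P z))
        (fun x => prob_μδ P μm hμm x) hgc hB0 (fun ω => hB _)]
    have : ∀ x, ∫ ω, g (cons0 z ω) ∂(μm (Measure.dirac x)) =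
        iterExp P q (fun ω => g (cons0 z ω)) x := by
      intro x
      apply IH _ B hgc (fun ω => hB _)
      intro ω ω' hagree
      apply hdep
      intro k hk
      cases k with
      | zero => rfl
      | succ k => exact hagree k (Nat.le_of_succ_le_succ hk)
    rw [integral_congr_ae (Filter.Eventually.of_forall this)]
    rfl

end IterExp
section DTV
variable {Ω : Type*} [MeasurableSpace Ω]

lemma abs_sub_le_dTV (μ ν : Measure Ω) [IsProbabilityMeasure μ] [IsProbabilityMeasure ν]
    {A : Set Ω} (hA : MeasurableSet A) :
    |(μ A).toReal - (ν A).toReal| ≤ dTV μ ν := by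
  apply le_ciSup (f := fun A : {A : Set Ω // MeasurableSet A} =>
    |(μ A.1).toReal - (ν A.1).toReal|) ?_ ⟨A, hA⟩
  refine ⟨1, ?_⟩
  rintro x ⟨⟨B, hB⟩, rfl⟩
  have h1 : (μ B).toReal ≤ 1 := by
    rw [← ENNReal.toReal_one]
    exact ENNReal.toReal_mono one_ne_top prob_le_one
  have h2 : (ν B).toReal ≤ 1 := by
    rw [← ENNReal.toReal_one]
    exact ENNReal.toReal_mono one_ne_top prob_le_one
  rw [abs_sub_le_iff]
  constructor <;> simp <;> [skip; skip] <;> linarith [ENNReal.toReal_nonneg (a := μ B),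
    ENNReal.toReal_nonneg (a := ν B)]

lemma dTV_nonneg (μ ν : Measure Ω) : 0 ≤ dTV μ ν :=
  Real.iSup_nonneg fun _ => abs_nonneg _

lemma abs_integral_sub_le_dTV (μ ν : Measure Ω) [IsProbabilityMeasure μ]
    [IsProbabilityMeasure ν] {h : Ω → ℝ} (hm : Measurable h) {b : ℝ} (hb : 0 ≤ b)
    (hbd : ∀ ω, |h ω| ≤ b) :
    |∫ ω, h ω ∂μ - ∫ ω, h ω ∂ν| ≤ 2 * b * dTV μ ν := by
  set g : Ω → ℝ := fun ω => h ω + b with hgdef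
  have hgm : Measurable g := hm.add measurable_const
  have hg0 : ∀ ω, 0 ≤ g ω := fun ω => by have := abs_le.mp (hbd ω); simp [hgdef]; linarith
  have hg2b : ∀ ω, g ω ≤ 2 * b := fun ω => by have := abs_le.mp (hbd ω); simp [hgdef]; linarith
  have hdiff : ∫ ω, h ω ∂μ - ∫ ω, h ω ∂ν = ∫ ω, g ω ∂μ - ∫ ω, g ω ∂ν := by
    have h1 : ∫ ω, g ω ∂μ = ∫ ω, h ω ∂μ + b := by
      rw [hgdef, integral_add (integrable_of_bdd hm.aestronglyMeasurable hbd)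
        (integrable_const b), integral_const]
      simp
    have h2 : ∫ ω, g ω ∂ν = ∫ ω, h ω ∂ν + b := by
      rw [hgdef, integral_add (integrable_of_bdd hm.aestronglyMeasurable hbd)
        (integrable_const b), integral_const]
      simp
    rw [h1, h2]; ring
  set F : Measure Ω → ℝ → ℝ := fun ρ t => (ρ {a | t < g a}).toReal with hFdef
  have hFanti : ∀ ρ : Measure Ω, IsProbabilityMeasure ρ → Antitone (F ρ) := by
    intro ρ hρ t s hts
    apply ENNReal.toReal_mono (measure_ne_top ρ _)
    apply measure_mono
    intro a ha
    exact lt_of_le_of_lt hts ha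
  have hFbd : ∀ (ρ : Measure Ω), IsProbabilityMeasure ρ → ∀ t, |F ρ t| ≤ 1 := by
    intro ρ hρ t
    rw [abs_of_nonneg ENNReal.toReal_nonneg, ← ENNReal.toReal_one]
    exact ENNReal.toReal_mono one_ne_top prob_le_one
  have hFzero : ∀ (ρ : Measure Ω), ∀ t, 2 * b ≤ t → F ρ t = 0 := by
    intro ρ t ht
    have : {a | t < g a} = ∅ := by
      ext a; simp only [mem_setOf_eq, mem_empty_iff_false, iff_false, not_lt]
      exact le_trans (hg2b a) ht
    simp [hFdef, this]
  have key : ∀ (ρ : Measure Ω), IsProbabilityMeasure ρ →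
      ∫ ω, g ω ∂ρ = ∫ t in Set.Ioc 0 (2*b), F ρ t := by
    intro ρ hρ
    have hint : Integrable g ρ := integrable_of_bdd hgm.aestronglyMeasurable
      (B := 2*b) (fun ω => by rw [abs_of_nonneg (hg0 ω)]; exact hg2b ω)
    rw [hint.integral_eq_integral_meas_lt (Filter.Eventually.of_forall hg0)]
    rw [← Set.Ioc_union_Ioi_eq_Ioi (by linarith : (0:ℝ) ≤ 2*b)]
    rw [setIntegral_union (Set.Ioc_disjoint_Ioi le_rfl) measurableSet_Ioi]
    · have : ∫ t in Set.Ioi (2*b), F ρ t = 0 := by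
        rw [setIntegral_congr_fun measurableSet_Ioi
          (fun t ht => hFzero ρ t (le_of_lt ht))]
        simp
      change (∫ t in Set.Ioc 0 (2*b), F ρ t) + ∫ t in Set.Ioi (2*b), F ρ t = ∫ t in Set.Ioc 0 (2*b), F ρ t
      rw [this, add_zero]
    · apply IntegrableOn.mono_set (t := Set.Ioc 0 (2*b)) ?_ subset_rfl
      apply Integrable.mono' (g := fun _ => (1:ℝ))
        ((integrableOn_const_iff).mpr (Or.inr (by rw [Real.volume_Ioc]; exact ofReal_lt_top)))
        ((hFanti ρ hρ).measurable.aestronglyMeasurable)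
      exact Filter.Eventually.of_forall fun t => by
        rw [Real.norm_eq_abs]; exact hFbd ρ hρ t
    · apply Integrable.mono' (g := fun _ => (0:ℝ)) (integrable_zero _ _ _)
        ((hFanti ρ hρ).measurable.aestronglyMeasurable)
      apply (ae_restrict_iff' measurableSet_Ioi).mpr
      exact Filter.Eventually.of_forall fun t ht => by
        rw [Real.norm_eq_abs, hFzero ρ t (le_of_lt ht)]; simp
  rw [hdiff, key μ inferInstance, key ν inferInstance]
  have hFint : ∀ (ρ : Measure Ω), IsProbabilityMeasure ρ →
      IntegrableOn (F ρ) (Set.Ioc 0 (2*b)) := by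
    intro ρ hρ
    apply Integrable.mono' (g := fun _ => (1:ℝ))
      ((integrableOn_const_iff).mpr (Or.inr (by rw [Real.volume_Ioc]; exact ofReal_lt_top)))
      ((hFanti ρ hρ).measurable.aestronglyMeasurable)
    exact Filter.Eventually.of_forall fun t => by rw [Real.norm_eq_abs]; exact hFbd ρ hρ t
  rw [← integral_sub (hFint μ inferInstance) (hFint ν inferInstance)]
  have habs : |∫ t in Set.Ioc 0 (2*b), (F μ t - F ν t)| ≤
      ∫ t in Set.Ioc 0 (2*b), |F μ t - F ν t| :=
    by simpa [Real.norm_eq_abs] using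
      norm_integral_le_integral_norm (μ := volume.restrict (Set.Ioc 0 (2*b)))
        (fun t => F μ t - F ν t)
  apply le_trans habs
  have hptwise : ∀ t ∈ Set.Ioc 0 (2*b), |F μ t - F ν t| ≤ dTV μ ν := by
    intro t _
    exact abs_sub_le_dTV μ ν (hgm measurableSet_Ioi)
  calc ∫ t in Set.Ioc 0 (2*b), |F μ t - F ν t|
      ≤ ∫ _ in Set.Ioc 0 (2*b), dTV μ ν := by
        apply setIntegral_mono_on ((hFint μ inferInstance).sub (hFint ν inferInstance)).abs
          ((integrableOn_const_iff).mpr (Or.inr (by rw [Real.volume_Ioc]; exact ofReal_lt_top)))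
          measurableSet_Ioc hptwise
    _ = (volume (Set.Ioc 0 (2*b))).toReal * dTV μ ν := by rw [setIntegral_const]; rfl
    _ ≤ 2 * b * dTV μ ν := by
        rw [Real.volume_Ioc, ENNReal.toReal_ofReal (by linarith)]
        simp

end DTV
section Core
variable {𝓧 : Type*} [MeasurableSpace 𝓧]

lemma core_bound (P : Kernel 𝓧 𝓧) [IsMarkovKernel P] (μm : Measure 𝓧 → Measure (ℕ → 𝓧))
    (hμm : IsMarkovFamily P μm) (π : Measure 𝓧) [IsProbabilityMeasure π]
    (hInv : Kernel.Invariant P π) (C : Set 𝓧) (xstar : 𝓧)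
    (r L : ℝ) (hr0 : 0 < r)
    (hH3 : ∀ y ∈ C, ∀ m : ℕ, dTV ((μm (Measure.dirac y)).map (fun ω => ω m)) π ≤ L * r ^ m)
    (n : ℕ) (c : Fin n → ℝ) (hc : ∀ i, 0 ≤ c i)
    (f : (Fin n → 𝓧) → ℝ) (hf : f ∈ BD 𝓧 n c)
    (j : Fin n) (v : Fin n → 𝓧) (hv : v j ∈ C) :
    |gfun μm f j v - gfunPi μm π f j v| ≤
      2 * L * ∑ k : Fin n, (if (j : ℕ) < (k : ℕ) then c k * r ^ ((k : ℕ) - (j : ℕ)) else 0) := by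
  classical
  obtain ⟨hfm, hfbd⟩ := hf
  set y := v j with hy
  set B : ℝ := |f (fun _ => xstar)| + ∑ k, c k with hB
  have hfB : ∀ x, |f x| ≤ B := by
    intro x
    have h1 : |f x - f (fun _ => xstar)| ≤ ∑ i, if x i = (fun _ => xstar) i then 0 else c i :=
      hfbd x _
    have h2 : (∑ i, if x i = (fun _ : Fin n => xstar) i then 0 else c i) ≤ ∑ i, c i :=
      Finset.sum_le_sum fun i _ => by split_ifs with h; exacts [hc i, le_rfl]
    calc |f x| = |(f x - f (fun _ => xstar)) + f (fun _ => xstar)| := by ring_nf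
      _ ≤ |f x - f (fun _ => xstar)| + |f (fun _ => xstar)| := abs_add_le _ _
      _ ≤ ∑ i, c i + |f (fun _ => xstar)| := by linarith
      _ = B := by rw [hB]; ring
  have hB0 : 0 ≤ B := le_trans (abs_nonneg _) (hfB (fun _ => xstar))
  set Φ : ℕ → (ℕ → 𝓧) → Fin n → 𝓧 := fun l ω k =>
    if (k : ℕ) ≤ (j : ℕ) then v k else
      if (k : ℕ) < (j : ℕ) + l then xstar else ω ((k : ℕ) - ((j : ℕ) + l)) with hΦ
  set Φp : ℕ → (ℕ → 𝓧) → Fin n → 𝓧 := fun l ω k =>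
    if (k : ℕ) ≤ (j : ℕ) then v k else
      if (k : ℕ) < (j : ℕ) + l + 1 then xstar else ω ((k : ℕ) - ((j : ℕ) + l)) with hΦp
  have hΦm : ∀ l, Measurable fun ω => f (Φ l ω) := by
    intro l
    apply hfm.comp
    apply measurable_pi_lambda
    intro k
    simp only [hΦ]
    by_cases h1 : (k : ℕ) ≤ (j : ℕ)
    · simp only [if_pos h1]; exact measurable_const
    by_cases h2 : (k : ℕ) < (j : ℕ) + l
    · simp only [if_neg h1, if_pos h2]; exact measurable_const
    · simp only [if_neg h1, if_neg h2]; exact measurable_pi_apply _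
  have hΦpm : ∀ l, Measurable fun ω => f (Φp l ω) := by
    intro l
    apply hfm.comp
    apply measurable_pi_lambda
    intro k
    simp only [hΦp]
    by_cases h1 : (k : ℕ) ≤ (j : ℕ)
    · simp only [if_pos h1]; exact measurable_const
    by_cases h2 : (k : ℕ) < (j : ℕ) + l + 1
    · simp only [if_neg h1, if_pos h2]; exact measurable_const
    · simp only [if_neg h1, if_neg h2]; exact measurable_pi_apply _
  set H : ℕ → 𝓧 → ℝ := fun l => iterExp P n (fun ω => f (Φ l ω)) with hH
  set Hp : ℕ → 𝓧 → ℝ := fun l => iterExp P n (fun ω => f (Φp l ω)) with hHp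
  have hHeq : ∀ l z, ∫ ω, f (Φ l ω) ∂(μm (Measure.dirac z)) = H l z := by
    intro l z
    apply iterExp_eq P μm hμm n _ B (hΦm l) (fun ω => hfB _)
    intro ω ω' hagree
    congr 1
    funext k
    simp only [hΦ]
    by_cases h1 : (k : ℕ) ≤ (j : ℕ)
    · simp only [if_pos h1]
    by_cases h2 : (k : ℕ) < (j : ℕ) + l
    · simp only [if_neg h1, if_pos h2]
    · simp only [if_neg h1, if_neg h2]
      apply hagree
      have := k.isLt
      omega
  have hHpeq : ∀ l z, ∫ ω, f (Φp l ω) ∂(μm (Measure.dirac z)) = Hp l z := by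
    intro l z
    apply iterExp_eq P μm hμm n _ B (hΦpm l) (fun ω => hfB _)
    intro ω ω' hagree
    congr 1
    funext k
    simp only [hΦp]
    by_cases h1 : (k : ℕ) ≤ (j : ℕ)
    · simp only [if_pos h1]
    by_cases h2 : (k : ℕ) < (j : ℕ) + l + 1
    · simp only [if_neg h1, if_pos h2]
    · simp only [if_neg h1, if_neg h2]
      apply hagree
      have := k.isLt
      omega
  have hHm : ∀ l, Measurable (H l) := fun l => measurable_iterExp' P n (hΦm l)
  have hHpm : ∀ l, Measurable (Hp l) := fun l => measurable_iterExp' P n (hΦpm l)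
  have hHb : ∀ l z, |H l z| ≤ B := fun l z => abs_iterExp_le P n _ B (fun ω => hfB _) z
  have hHpb : ∀ l z, |Hp l z| ≤ B := fun l z => abs_iterExp_le P n _ B (fun ω => hfB _) z
  have hP0 : H 0 = Hp 0 := by
    have heq : (fun ω => f (Φ 0 ω)) = (fun ω => f (Φp 0 ω)) := by
      funext ω
      congr 1
      funext k
      simp only [hΦ, hΦp]
      by_cases h1 : (k : ℕ) ≤ (j : ℕ)
      · simp only [if_pos h1]
      · have h2 : ¬ (k : ℕ) < (j : ℕ) + 0 := by omega
        have h3 : ¬ (k : ℕ) < (j : ℕ) + 0 + 1 := by omega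
        simp only [if_neg h1, if_neg h2, if_neg h3]
    show iterExp P n (fun ω => f (Φ 0 ω)) = iterExp P n (fun ω => f (Φp 0 ω))
    rw [heq]
  have hST : ∀ l z, Hp l z = ∫ z', H (l + 1) z' ∂(P z) := by
    intro l z
    haveI := hμm.1 (P z) inferInstance
    calc Hp l z = ∫ ω, f (Φp l ω) ∂(μm (Measure.dirac z)) := (hHpeq l z).symm
      _ = ∫ ω, f (Φp l (cons0 z ω)) ∂(μm (P z)) := by
          rw [μδ_eq P μm hμm z, integral_map (measurable_cons0 z).aemeasurable
            (hΦpm l).aestronglyMeasurable]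
      _ = ∫ ω, f (Φ (l + 1) ω) ∂(μm (P z)) := by
          apply integral_congr_ae
          apply Filter.Eventually.of_forall
          intro ω
          show f (Φp l (cons0 z ω)) = f (Φ (l + 1) ω)
          congr 1
          funext k
          simp only [hΦ, hΦp]
          by_cases h1 : (k : ℕ) ≤ (j : ℕ)
          · simp only [if_pos h1]
          by_cases h2 : (k : ℕ) < (j : ℕ) + l + 1
          · have h2' : (k : ℕ) < (j : ℕ) + (l + 1) := by omega
            simp only [if_neg h1, if_pos h2, if_pos h2']
          · have h2' : ¬ ((k : ℕ) < (j : ℕ) + (l + 1)) := by omega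
            simp only [if_neg h1, if_neg h2, if_neg h2']
            have harith : (k : ℕ) - ((j : ℕ) + l) = ((k : ℕ) - ((j : ℕ) + (l + 1))) + 1 := by
              omega
            rw [harith]
            rfl
      _ = ∫ x, ∫ ω, f (Φ (l + 1) ω) ∂(μm (Measure.dirac x)) ∂(P z) := by
          rw [bindδ P μm hμm (P z), integral_bind_of_bdd (P z) _
            (aemeasurable_μδ P μm hμm (P z)) (fun x => prob_μδ P μm hμm x)
            (hΦm (l + 1)) hB0 (fun ω => hfB _)]
      _ = ∫ z', H (l + 1) z' ∂(P z) :=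
          integral_congr_ae (Filter.Eventually.of_forall fun x => hHeq (l + 1) x)
  have hPD : ∀ l, ∀ hl : (j : ℕ) + l < n, ∀ z, |H l z - Hp l z| ≤ c ⟨(j : ℕ) + l, hl⟩ := by
    intro l hl z
    haveI := prob_μδ P μm hμm z
    have hint1 : Integrable (fun ω => f (Φ l ω)) (μm (Measure.dirac z)) :=
      integrable_of_bdd (hΦm l).aestronglyMeasurable (fun ω => hfB _)
    have hint2 : Integrable (fun ω => f (Φp l ω)) (μm (Measure.dirac z)) :=
      integrable_of_bdd (hΦpm l).aestronglyMeasurable (fun ω => hfB _)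
    rw [← hHeq l z, ← hHpeq l z, ← integral_sub hint1 hint2]
    have hpt : ∀ ω, |f (Φ l ω) - f (Φp l ω)| ≤ c ⟨(j : ℕ) + l, hl⟩ := by
      intro ω
      apply le_trans (hfbd (Φ l ω) (Φp l ω))
      have hterm : ∀ i : Fin n, (if Φ l ω i = Φp l ω i then 0 else c i) ≤
          (if i = ⟨(j : ℕ) + l, hl⟩ then c i else 0) := by
        intro i
        by_cases hi : i = ⟨(j : ℕ) + l, hl⟩
        · rw [if_pos hi]
          split_ifs with h
          · exact hc i
          · exact le_rfl
        · have heq : Φ l ω i = Φp l ω i := by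
            simp only [hΦ, hΦp]
            have hi' : (i : ℕ) ≠ (j : ℕ) + l := fun hcon => hi (Fin.ext hcon)
            by_cases h1 : (i : ℕ) ≤ (j : ℕ)
            · simp only [if_pos h1]
            by_cases h2 : (i : ℕ) < (j : ℕ) + l
            · have h3 : (i : ℕ) < (j : ℕ) + l + 1 := by omega
              simp only [if_neg h1, if_pos h2, if_pos h3]
            · have h3 : ¬ ((i : ℕ) < (j : ℕ) + l + 1) := by omega
              simp only [if_neg h1, if_neg h2, if_neg h3]
          rw [if_pos heq, if_neg hi]
      calc (∑ i, if Φ l ω i = Φp l ω i then 0 else c i)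
          ≤ ∑ i, (if i = ⟨(j : ℕ) + l, hl⟩ then c i else 0) :=
            Finset.sum_le_sum fun i _ => hterm i
        _ = c ⟨(j : ℕ) + l, hl⟩ := by
            rw [Finset.sum_ite_eq' Finset.univ]
            simp
    have := norm_integral_le_of_norm_le_const (μ := μm (Measure.dirac z))
      (f := fun ω => f (Φ l ω) - f (Φp l ω)) (C := c ⟨(j : ℕ) + l, hl⟩)
      (Filter.Eventually.of_forall fun ω => by rw [Real.norm_eq_abs]; exact hpt ω)
    rw [Real.norm_eq_abs] at this
    simpa [measure_univ] using this
  -- marginal measures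
  set μl : ℕ → Measure 𝓧 := fun l => (μm (Measure.dirac y)).map (fun ω => ω l) with hμl
  have hμlprob : ∀ l, IsProbabilityMeasure (μl l) := fun l => prob_marginal P μm hμm y l
  have hμstep : ∀ l, μl (l + 1) = (μl l).bind (fun x => P x) := fun l => Mfun_succ' P μm hμm l y
  have hμ1 : μl 1 = P y := by
    rw [show (1 : ℕ) = 0 + 1 from rfl, hμstep 0]
    rw [show μl 0 = Measure.dirac y from Mfun_zero P μm hμm y]
    exact Measure.dirac_bind P.measurable y
  have hdTV : ∀ l, dTV (μl l) π ≤ L * r ^ l := fun l => hH3 y hv l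
  have hL0 : 0 ≤ L := by
    have h0 := le_trans (dTV_nonneg (μl 0) π) (hdTV 0)
    simpa using h0
  have hTμ : ∀ l, ∫ z, Hp l z ∂(μl l) = ∫ z, H (l + 1) z ∂(μl (l + 1)) := by
    intro l
    haveI := hμlprob l
    rw [integral_congr_ae (Filter.Eventually.of_forall (hST l)), hμstep l,
      integral_bind_of_bdd (μl l) (fun x => (P x : Measure 𝓧)) P.measurable.aemeasurable
        (fun x => inferInstance) (hHm (l + 1)) hB0 (hHb (l + 1))]
  have hTπ : ∀ l, ∫ z, Hp l z ∂π = ∫ z, H (l + 1) z ∂π := by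
    intro l
    rw [integral_congr_ae (Filter.Eventually.of_forall (hST l))]
    conv_rhs => rw [← hInv.def]
    rw [integral_bind_of_bdd π (fun x => (P x : Measure 𝓧)) P.measurable.aemeasurable
      (fun x => inferInstance) (hHm (l + 1)) hB0 (hHb (l + 1))]
  -- constant case
  have KL0 : ∀ l : ℕ, n ≤ (j : ℕ) + l →
      |∫ z, H l z ∂(μl l) - ∫ z, H l z ∂π| ≤
        2 * L * ∑ k : Fin n, (if (j : ℕ) + l ≤ (k : ℕ) then c k * r ^ ((k : ℕ) - (j : ℕ)) else 0) := by
    intro l hln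
    have hΦconst : ∀ ω, f (Φ l ω) = f (fun k => if (k : ℕ) ≤ (j : ℕ) then v k else xstar) := by
      intro ω
      congr 1
      funext k
      simp only [hΦ]
      by_cases h1 : (k : ℕ) ≤ (j : ℕ)
      · simp only [if_pos h1]
      have h2 : (k : ℕ) < (j : ℕ) + l := by have := k.isLt; omega
      simp only [if_neg h1, if_pos h2]
    have hconst : ∀ z, H l z = f (fun k => if (k : ℕ) ≤ (j : ℕ) then v k else xstar) := by
      intro z
      haveI := prob_μδ P μm hμm z
      rw [← hHeq l z, integral_congr_ae (Filter.Eventually.of_forall hΦconst), integral_const]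
      simp
    have hzero : (∑ k : Fin n, (if (j : ℕ) + l ≤ (k : ℕ) then c k * r ^ ((k : ℕ) - (j : ℕ)) else 0)) = 0 :=
      Finset.sum_eq_zero fun k _ => by rw [if_neg (by have := k.isLt; omega)]
    haveI := hμlprob l
    rw [integral_congr_ae (Filter.Eventually.of_forall hconst),
      integral_congr_ae (Filter.Eventually.of_forall hconst), integral_const, integral_const,
      hzero]
    simp [measure_univ]
  -- main induction
  have KL : ∀ d l : ℕ, 1 ≤ l → n ≤ (j : ℕ) + l + d →
      |∫ z, H l z ∂(μl l) - ∫ z, H l z ∂π| ≤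
        2 * L * ∑ k : Fin n, (if (j : ℕ) + l ≤ (k : ℕ) then c k * r ^ ((k : ℕ) - (j : ℕ)) else 0) := by
    intro d
    induction d with
    | zero =>
      intro l hl1 hln
      exact KL0 l (by omega)
    | succ d IH =>
      intro l hl1 hln
      by_cases hcase : n ≤ (j : ℕ) + l
      · exact KL0 l hcase
      push_neg at hcase
      haveI := hμlprob l
      have hintHμ : Integrable (H l) (μl l) :=
        integrable_of_bdd (hHm l).aestronglyMeasurable (hHb l)
      have hintHpμ : Integrable (Hp l) (μl l) :=
        integrable_of_bdd (hHpm l).aestronglyMeasurable (hHpb l)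
      have hintHπ : Integrable (H l) π :=
        integrable_of_bdd (hHm l).aestronglyMeasurable (hHb l)
      have hintHpπ : Integrable (Hp l) π :=
        integrable_of_bdd (hHpm l).aestronglyMeasurable (hHpb l)
      have hsplit : ∫ z, H l z ∂(μl l) - ∫ z, H l z ∂π =
          ((∫ z, (H l z - Hp l z) ∂(μl l)) - ∫ z, (H l z - Hp l z) ∂π) +
            ((∫ z, Hp l z ∂(μl l)) - ∫ z, Hp l z ∂π) := by
        rw [integral_sub hintHμ hintHpμ, integral_sub hintHπ hintHpπ]
        ring
      rw [hsplit]
      have h1 : |(∫ z, (H l z - Hp l z) ∂(μl l)) - ∫ z, (H l z - Hp l z) ∂π| ≤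
          2 * c ⟨(j : ℕ) + l, hcase⟩ * dTV (μl l) π :=
        abs_integral_sub_le_dTV (μl l) π ((hHm l).sub (hHpm l)) (hc _) (hPD l hcase)
      have h1' : |(∫ z, (H l z - Hp l z) ∂(μl l)) - ∫ z, (H l z - Hp l z) ∂π| ≤
          2 * c ⟨(j : ℕ) + l, hcase⟩ * (L * r ^ l) :=
        le_trans h1 (mul_le_mul_of_nonneg_left (hdTV l)
          (by have := hc ⟨(j : ℕ) + l, hcase⟩; linarith))
      have h2 : |(∫ z, Hp l z ∂(μl l)) - ∫ z, Hp l z ∂π| ≤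
          2 * L * ∑ k : Fin n, (if (j : ℕ) + (l + 1) ≤ (k : ℕ) then c k * r ^ ((k : ℕ) - (j : ℕ)) else 0) := by
        rw [hTμ l, hTπ l]
        exact IH (l + 1) (by omega) (by omega)
      have hsum : (∑ k : Fin n, (if (j : ℕ) + l ≤ (k : ℕ) then c k * r ^ ((k : ℕ) - (j : ℕ)) else 0)) =
          c ⟨(j : ℕ) + l, hcase⟩ * r ^ l +
            ∑ k : Fin n, (if (j : ℕ) + (l + 1) ≤ (k : ℕ) then c k * r ^ ((k : ℕ) - (j : ℕ)) else 0) := by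
        have hterm : ∀ k : Fin n, (if (j : ℕ) + l ≤ (k : ℕ) then c k * r ^ ((k : ℕ) - (j : ℕ)) else 0) =
            (if k = ⟨(j : ℕ) + l, hcase⟩ then c k * r ^ ((k : ℕ) - (j : ℕ)) else 0) +
              (if (j : ℕ) + (l + 1) ≤ (k : ℕ) then c k * r ^ ((k : ℕ) - (j : ℕ)) else 0) := by
          intro k
          by_cases hk : k = ⟨(j : ℕ) + l, hcase⟩
          · have hk' : (k : ℕ) = (j : ℕ) + l := by rw [hk]
            rw [if_pos hk, if_pos (by omega), if_neg (by omega), add_zero]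
          · have hk' : (k : ℕ) ≠ (j : ℕ) + l := fun h => hk (Fin.ext h)
            rw [if_neg hk]
            by_cases h2 : (j : ℕ) + l ≤ (k : ℕ)
            · rw [if_pos h2, if_pos (by omega), zero_add]
            · rw [if_neg h2, if_neg (by omega), zero_add]
        rw [Finset.sum_congr rfl fun k _ => hterm k, Finset.sum_add_distrib,
          Finset.sum_ite_eq' Finset.univ (⟨(j : ℕ) + l, hcase⟩ : Fin n)
            (fun k => c k * r ^ ((k : ℕ) - (j : ℕ)))]
        simp only [Finset.mem_univ, if_true]
        have : (((⟨(j : ℕ) + l, hcase⟩ : Fin n) : ℕ) - (j : ℕ)) = l := by simp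
        rw [this]
      rw [hsum]
      have habs := abs_add_le ((∫ z, (H l z - Hp l z) ∂(μl l)) - ∫ z, (H l z - Hp l z) ∂π)
        ((∫ z, Hp l z ∂(μl l)) - ∫ z, Hp l z ∂π)
      have hring : 2 * c ⟨(j : ℕ) + l, hcase⟩ * (L * r ^ l) =
          2 * L * (c ⟨(j : ℕ) + l, hcase⟩ * r ^ l) := by ring
      rw [hring] at h1'
      calc |_ + _| ≤ _ + _ := habs
        _ ≤ 2 * L * (c ⟨(j : ℕ) + l, hcase⟩ * r ^ l) +
            2 * L * ∑ k : Fin n, (if (j : ℕ) + (l + 1) ≤ (k : ℕ) then c k * r ^ ((k : ℕ) - (j : ℕ)) else 0) := by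
          linarith
        _ = 2 * L * (c ⟨(j : ℕ) + l, hcase⟩ * r ^ l +
            ∑ k : Fin n, (if (j : ℕ) + (l + 1) ≤ (k : ℕ) then c k * r ^ ((k : ℕ) - (j : ℕ)) else 0)) := by
          ring
  -- identification of gfun and gfunPi
  have hΦ0 : ∀ ω : ℕ → 𝓧, (fun k : Fin n => if (k : ℕ) ≤ (j : ℕ) then v k else ω ((k : ℕ) - (j : ℕ)))
      = Φ 0 ω := by
    intro ω
    funext k
    simp only [hΦ]
    by_cases h1 : (k : ℕ) ≤ (j : ℕ)
    · simp only [if_pos h1]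
    have h2 : ¬ ((k : ℕ) < (j : ℕ) + 0) := by omega
    have h2' : ¬ ((k : ℕ) < (j : ℕ)) := by omega
    simp only [if_neg h1, if_neg h2, if_neg h2', Nat.add_zero]
  have hgf : gfun μm f j v = ∫ z, H 1 z ∂(μl 1) := by
    rw [hμ1]
    calc gfun μm f j v = ∫ ω, f (Φ 0 ω) ∂(μm (Measure.dirac y)) := by
          simp only [gfun, ← hy]
          exact integral_congr_ae (Filter.Eventually.of_forall fun ω => by
            simp only [hΦ0 ω])
      _ = H 0 y := hHeq 0 y
      _ = Hp 0 y := by rw [hP0]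
      _ = ∫ z', H 1 z' ∂(P y) := hST 0 y
  have hgfPi : gfunPi μm π f j v = ∫ z, H 1 z ∂π := by
    calc gfunPi μm π f j v = ∫ ω, f (Φ 0 ω) ∂(μm π) := by
          simp only [gfunPi]
          exact integral_congr_ae (Filter.Eventually.of_forall fun ω => by
            simp only [hΦ0 ω])
      _ = ∫ x, ∫ ω, f (Φ 0 ω) ∂(μm (Measure.dirac x)) ∂π := by
          rw [bindδ P μm hμm π, integral_bind_of_bdd π _ (aemeasurable_μδ P μm hμm π)
            (fun x => prob_μδ P μm hμm x) (hΦm 0) hB0 (fun ω => hfB _)]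
      _ = ∫ x, Hp 0 x ∂π := by
          apply integral_congr_ae
          apply Filter.Eventually.of_forall
          intro x
          show (∫ ω, f (Φ 0 ω) ∂(μm (Measure.dirac x))) = Hp 0 x
          rw [hHeq 0 x, hP0]
      _ = ∫ z, H 1 z ∂π := hTπ 0
  rw [hgf, hgfPi]
  exact KL n 1 le_rfl (by omega)
end Core
section HitTime
variable {𝓧 : Type*} [MeasurableSpace 𝓧]

lemma hitTime_eq_coe {C : Set 𝓧} {i j : ℕ} {ω : ℕ → 𝓧} (h : hitTime C i ω = (j : ℕ∞)) :
    i ≤ j ∧ ω j ∈ C := by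
  classical
  have hne : ∃ m : ℕ, i ≤ m ∧ ω m ∈ C := by
    by_contra hemp
    push_neg at hemp
    rw [hitTime] at h
    have htop : (⨅ (m : ℕ) (_ : i ≤ m ∧ ω m ∈ C), (m : ℕ∞)) = ⊤ := by
      rw [iInf_eq_top]
      intro m
      rw [iInf_eq_top]
      intro hm
      exact absurd hm.2 (hemp m hm.1)
    rw [htop] at h
    exact (ENat.coe_ne_top j) h.symm
  have hfind := Nat.find_spec hne
  have heq : hitTime C i ω = ((Nat.find hne : ℕ) : ℕ∞) := by
    simp only [hitTime]
    apply le_antisymm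
    · exact iInf₂_le (Nat.find hne) hfind
    · apply le_iInf₂
      intro m hm
      exact_mod_cast Nat.find_min' hne hm
  rw [heq] at h
  have hNj : Nat.find hne = j := by exact_mod_cast h
  rw [← hNj]
  exact hfind

end HitTime
/-- Bound on the remainder term `R_{i,2}` :
`|∑_{j=i}^{n-2} (g_j − g_{j,π})(X_0,…,X_j) 1{τ_C^{i-1}=i−1, τ_C^i=j}|
≤ 2L · 1{τ_C^{i-1}=i−1} · ∑_{k=τ_C^i+1}^{n-1} c_k r^(k−τ_C^i)`, `P_x`-a.s. -/
theorem remainder_R2_bound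
    {𝓧 : Type*} [MeasurableSpace 𝓧] (P : Kernel 𝓧 𝓧) [IsMarkovKernel P]
    (μm : Measure 𝓧 → Measure (ℕ → 𝓧)) (hμm : IsMarkovFamily P μm)
    -- (H1) `P` is irreducible and aperiodic, with unique invariant probability `π`
    (π : Measure 𝓧) [IsProbabilityMeasure π]
    (hIA : IrreducibleAperiodic P) (hInv : Kernel.Invariant P π)
    (hUniq : ∀ π' : Measure 𝓧, IsProbabilityMeasure π' → Kernel.Invariant P π' → π' = π)
    -- (H2) geometric return times to `C`
    (C : Set 𝓧) (hCne : C.Nonempty) (hCmeas : MeasurableSet C)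
    (u M : ℝ) (hu : 1 < u) (hM : 0 < M)
    (hH2 : ∀ y ∈ C, ∫⁻ ω, geomPow u (retTime C ω) ∂(μm (Measure.dirac y)) ≤ ENNReal.ofReal M)
    -- (H3) geometric ergodicity from `C`
    (r L : ℝ) (hr0 : 0 < r) (hr1 : r < 1) (hL : 1 ≤ L)
    (hH3 : ∀ y ∈ C, ∀ m : ℕ, dTV ((μm (Measure.dirac y)).map (fun ω => ω m)) π ≤ L * r ^ m)
    (n : ℕ) (hn : 1 ≤ n) (c : Fin n → ℝ) (hc : ∀ i, 0 ≤ c i)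
    (f : (Fin n → 𝓧) → ℝ) (hf : f ∈ BD 𝓧 n c)
    (x : 𝓧) :
    ∀ i : ℕ, 1 ≤ i → i < n →
      ∀ᵐ ω ∂(μm (Measure.dirac x)),
        |∑ j : Fin n,
            if i ≤ (j : ℕ) ∧ (j : ℕ) + 2 ≤ n
                ∧ hitTime C (i - 1) ω = ((i - 1 : ℕ) : ℕ∞)
                ∧ hitTime C i ω = ((j : ℕ) : ℕ∞)
              then gfun μm f j (fun k => ω (k : ℕ)) - gfunPi μm π f j (fun k => ω (k : ℕ))
              else 0|
          ≤ 2 * L * (if hitTime C (i - 1) ω = ((i - 1 : ℕ) : ℕ∞) then 1 else 0)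
              * ∑ k : Fin n, if hitTime C i ω < ((k : ℕ) : ℕ∞)
                  then c k * r ^ ((k : ℕ) - (hitTime C i ω).toNat) else 0 := by
  intro i hi1 hin
  apply Filter.Eventually.of_forall
  intro ω
  obtain ⟨xstar, hxstar⟩ := hCne
  by_cases h1 : hitTime C (i - 1) ω = ((i - 1 : ℕ) : ℕ∞)
  · by_cases h2 : ∃ j0 : Fin n, i ≤ (j0 : ℕ) ∧ (j0 : ℕ) + 2 ≤ n ∧
        hitTime C i ω = ((j0 : ℕ) : ℕ∞)
    · obtain ⟨j0, hj0i, hj0n, hj0⟩ := h2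
      have hsum : (∑ j : Fin n,
          if i ≤ (j : ℕ) ∧ (j : ℕ) + 2 ≤ n
              ∧ hitTime C (i - 1) ω = ((i - 1 : ℕ) : ℕ∞)
              ∧ hitTime C i ω = ((j : ℕ) : ℕ∞)
            then gfun μm f j (fun k => ω (k : ℕ)) - gfunPi μm π f j (fun k => ω (k : ℕ))
            else 0) =
          gfun μm f j0 (fun k => ω (k : ℕ)) - gfunPi μm π f j0 (fun k => ω (k : ℕ)) := by
        rw [Finset.sum_eq_single j0]
        · rw [if_pos ⟨hj0i, hj0n, h1, hj0⟩]
        · intro j _ hne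
          rw [if_neg]
          rintro ⟨_, _, _, hj⟩
          apply hne
          have hcast : ((j : ℕ) : ℕ∞) = ((j0 : ℕ) : ℕ∞) := hj.symm.trans hj0
          have : (j : ℕ) = (j0 : ℕ) := by exact_mod_cast hcast
          exact Fin.ext this
        · intro h; exact absurd (Finset.mem_univ j0) h
      rw [hsum]
      have hmem := hitTime_eq_coe hj0
      have hcore := core_bound P μm hμm π hInv C xstar r L hr0 hH3 n c hc f hf j0
        (fun k => ω (k : ℕ)) hmem.2
      apply le_trans hcore
      apply le_of_eq
      rw [if_pos h1, mul_one, hj0]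
      congr 1
      refine Finset.sum_congr rfl fun k _ => ?_
      have hlt : (((j0 : ℕ) : ℕ∞) < ((k : ℕ) : ℕ∞)) ↔ ((j0 : ℕ) < (k : ℕ)) :=
        ENat.coe_lt_coe
      have htn : (((j0 : ℕ) : ℕ∞)).toNat = (j0 : ℕ) := ENat.toNat_coe _
      simp only [hlt, htn]
    · have hz : (∑ j : Fin n,
          if i ≤ (j : ℕ) ∧ (j : ℕ) + 2 ≤ n
              ∧ hitTime C (i - 1) ω = ((i - 1 : ℕ) : ℕ∞)
              ∧ hitTime C i ω = ((j : ℕ) : ℕ∞)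
            then gfun μm f j (fun k => ω (k : ℕ)) - gfunPi μm π f j (fun k => ω (k : ℕ))
            else 0) = 0 :=
        Finset.sum_eq_zero fun j _ => by
          rw [if_neg]
          rintro ⟨ha, hb, _, hd⟩
          exact h2 ⟨j, ha, hb, hd⟩
      rw [hz, abs_zero, if_pos h1, mul_one]
      apply mul_nonneg (by linarith)
      apply Finset.sum_nonneg
      intro k _
      split_ifs with h
      · exact mul_nonneg (hc k) (pow_nonneg hr0.le _)
      · exact le_rfl
  · have hz : (∑ j : Fin n,
        if i ≤ (j : ℕ) ∧ (j : ℕ) + 2 ≤ n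
            ∧ hitTime C (i - 1) ω = ((i - 1 : ℕ) : ℕ∞)
            ∧ hitTime C i ω = ((j : ℕ) : ℕ∞)
          then gfun μm f j (fun k => ω (k : ℕ)) - gfunPi μm π f j (fun k => ω (k : ℕ))
          else 0) = 0 :=
      Finset.sum_eq_zero fun j _ => by
        rw [if_neg]
        rintro ⟨_, _, hA, _⟩
        exact h1 hA
    rw [hz, abs_zero, if_neg h1]
    simp

end QMD

end
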